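/- arXiv:2205.14174 — 3 statements merged into one kernel-verified Lean document; each statement's English description precedes it below -/
import Mathlib

section
/- Let b > 0 and s ≥ 0, and let μ, μ' be real numbers with |μ − μ'| ≤ s. Then for every real x, the Laplace density with location μ and scale b satisfies (1/(2b))·exp(−|x − μ|/b) ≤ exp(s/b) · (1/(2b))·exp(−|x − μ'|/b). -/
/-- The Laplace density with location `μ` and scale `b`. -/
noncomputable def laplaceDensity (μ b : ℝ) (x : ℝ) : ℝ :=
  (1 / (2 * b)) * Real.exp (-|x - μ| / b)

theorem laplaceDensity_le_exp_abs_sub_mul {b : ℝ} (hb : 0 < b) (μ μ' x : ℝ) :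
    laplaceDensity μ b x ≤ Real.exp (|μ - μ'| / b) * laplaceDensity μ' b x := by
  have hdist : |x - μ'| - |x - μ| ≤ |μ - μ'| := by
    simpa using abs_sub_abs_le_abs_sub (x - μ') (x - μ)
  have hexponent : -|x - μ| / b ≤ |μ - μ'| / b + -|x - μ'| / b := by
    rw [← add_div, div_le_div_iff_of_pos_right hb]
    linarith
  unfold laplaceDensity
  rw [mul_left_comm, ← Real.exp_add]
  gcongr

theorem laplaceDensity_ratio_le_general (b s μ μ' : ℝ) (hb : 0 < b)
    (h : |μ - μ'| ≤ s) (x : ℝ) :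
    laplaceDensity μ b x ≤ Real.exp (s / b) * laplaceDensity μ' b x := by
  have hdensity : 0 ≤ laplaceDensity μ' b x := by unfold laplaceDensity; positivity
  calc laplaceDensity μ b x
      ≤ Real.exp (|μ - μ'| / b) * laplaceDensity μ' b x :=
        laplaceDensity_le_exp_abs_sub_mul hb μ μ' x
    _ ≤ Real.exp (s / b) * laplaceDensity μ' b x := by gcongr

/-- Pointwise density-ratio bound for the Laplace mechanism. -/
theorem laplaceDensity_ratio_le (b s μ μ' : ℝ) (hb : 0 < b) (hs : 0 ≤ s)
    (h : |μ - μ'| ≤ s) (x : ℝ) :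
    laplaceDensity μ b x ≤ Real.exp (s / b) * laplaceDensity μ' b x :=
  laplaceDensity_ratio_le_general b s μ μ' hb h x
end

section
/- Let b > 0 and s ≥ 0, and let μ, μ' be real numbers with |μ − μ'| ≤ s. Let ν_μ and ν_{μ'} be the Laplace measures with locations μ and μ' and common scale b. Then for every measurable set S ⊆ ℝ, ν_μ(S) ≤ exp(s/b) · ν_{μ'}(S). -/
/-! The triangle inequality `|x - μ'| ≤ |x - μ| + |μ - μ'|` bounds the ratio of the two Laplace
densities pointwise by `exp (|μ - μ'| / b)`; integrating gives the same bound for the measures. -/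

open MeasureTheory

/-- The Laplace measure with location `μ` and scale `b`: the measure on `ℝ` whose density
with respect to Lebesgue measure is the Laplace density. -/
noncomputable def laplaceMeasure (μ b : ℝ) : Measure ℝ :=
  volume.withDensity (fun x => ENNReal.ofReal (laplaceDensity μ b x))

theorem laplaceDensity_le_exp_mul {μ μ' b : ℝ} (hb : 0 ≤ b) (x : ℝ) :
    laplaceDensity μ b x ≤ Real.exp (|μ - μ'| / b) * laplaceDensity μ' b x := by
  have hexp : -|x - μ| / b ≤ |μ - μ'| / b + -|x - μ'| / b := by
    rw [← add_div]
    gcongr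
    linarith [abs_sub_le x μ μ']
  calc laplaceDensity μ b x ≤ 1 / (2 * b) * Real.exp (|μ - μ'| / b + -|x - μ'| / b) := by
        unfold laplaceDensity; gcongr
    _ = Real.exp (|μ - μ'| / b) * laplaceDensity μ' b x := by
        rw [Real.exp_add, laplaceDensity]; ring

theorem laplaceMeasure_le_smul {μ μ' b : ℝ} (hb : 0 ≤ b) :
    laplaceMeasure μ b ≤ ENNReal.ofReal (Real.exp (|μ - μ'| / b)) • laplaceMeasure μ' b := by
  rw [laplaceMeasure, laplaceMeasure, ← withDensity_smul' _ _ ENNReal.ofReal_ne_top]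
  refine withDensity_mono (Filter.Eventually.of_forall fun x => ?_)
  rw [Pi.smul_apply, smul_eq_mul, ← ENNReal.ofReal_mul (Real.exp_nonneg _)]
  exact ENNReal.ofReal_le_ofReal (laplaceDensity_le_exp_mul hb x)

theorem laplaceMeasure_apply_le_general (b s μ μ' : ℝ) (hb : 0 < b)
    (h : |μ - μ'| ≤ s) (S : Set ℝ) :
    laplaceMeasure μ b S ≤ ENNReal.ofReal (Real.exp (s / b)) * laplaceMeasure μ' b S :=
  calc laplaceMeasure μ b S
      ≤ ENNReal.ofReal (Real.exp (|μ - μ'| / b)) * laplaceMeasure μ' b S :=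
        laplaceMeasure_le_smul hb.le S
    _ ≤ ENNReal.ofReal (Real.exp (s / b)) * laplaceMeasure μ' b S := by gcongr

/-- The Laplace mechanism guarantee: if `|μ - μ'| ≤ s` then the Laplace measure at location `μ`
assigns every measurable set at most `exp(s/b)` times the mass assigned by the one at `μ'`. -/
theorem laplaceMeasure_apply_le (b s μ μ' : ℝ) (hb : 0 < b) (hs : 0 ≤ s)
    (h : |μ - μ'| ≤ s) (S : Set ℝ) (hS : MeasurableSet S) :
    laplaceMeasure μ b S ≤ ENNReal.ofReal (Real.exp (s / b)) * laplaceMeasure μ' b S :=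
  laplaceMeasure_apply_le_general b s μ μ' hb h S
end

section
/- Let b > 0 and let ν be the Laplace measure with location 0 and scale b. Then for every real λ with λ²b² ≤ 1/2, the moment generating function satisfies ∫ exp(λy) dν(y) ≤ exp(2λ²b²). -/
/-!
Splitting the line at `0`, the Laplace law with scale `b` has moment generating function
`exp (t μ) / (1 - t² b²)` for `|t| b < 1`. For `x = λ² b² ≤ 1/2` one has
`(1 - x)(1 + 2x) = 1 + x (1 - 2x) ≥ 1`, hence `(1 - x)⁻¹ ≤ 1 + 2x ≤ exp (2x)`.
-/

open MeasureTheory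

open Real Set ProbabilityTheory

lemma integrableOn_exp_mul_sub_mul_abs_Iic {c t : ℝ} (ht : |t| < c) :
    IntegrableOn (fun y => exp (t * y - c * |y|)) (Iic 0) := by
  refine (integrableOn_exp_mul_Iic (a := t + c) (by linarith [neg_abs_le t]) 0).congr_fun
    (fun y (hy : y ≤ 0) => ?_) measurableSet_Iic
  rw [abs_of_nonpos hy]; ring_nf

lemma integrableOn_exp_mul_sub_mul_abs_Ioi {c t : ℝ} (ht : |t| < c) :
    IntegrableOn (fun y => exp (t * y - c * |y|)) (Ioi 0) := by
  refine (integrableOn_exp_mul_Ioi (a := t - c) (by linarith [le_abs_self t]) 0).congr_fun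
    (fun y (hy : 0 < y) => ?_) measurableSet_Ioi
  rw [abs_of_pos hy]; ring_nf

lemma integral_exp_mul_sub_mul_abs {c t : ℝ} (ht : |t| < c) :
    ∫ y, exp (t * y - c * |y|) = 2 * c / (c ^ 2 - t ^ 2) := by
  have hc_add : 0 < t + c := by linarith [neg_abs_le t]
  have hc_sub : t - c < 0 := by linarith [le_abs_self t]
  have h_Iic : ∫ y in Iic 0, exp (t * y - c * |y|) = 1 / (t + c) := by
    rw [setIntegral_congr_fun measurableSet_Iic (g := fun y => exp ((t + c) * y))
      (fun y (hy : y ≤ 0) => by rw [abs_of_nonpos hy]; ring_nf), integral_exp_mul_Iic hc_add]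
    simp
  have h_Ioi : ∫ y in Ioi 0, exp (t * y - c * |y|) = -1 / (t - c) := by
    rw [setIntegral_congr_fun measurableSet_Ioi (g := fun y => exp ((t - c) * y))
      (fun y (hy : 0 < y) => by rw [abs_of_pos hy]; ring_nf), integral_exp_mul_Ioi hc_sub]
    simp
  rw [← intervalIntegral.integral_Iic_add_Ioi (integrableOn_exp_mul_sub_mul_abs_Iic ht)
    (integrableOn_exp_mul_sub_mul_abs_Ioi ht), h_Iic, h_Ioi]
  have : c ^ 2 - t ^ 2 ≠ 0 := by nlinarith
  field_simp [hc_add.ne', hc_sub.ne]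
  ring

lemma laplaceDensity_nonneg {b : ℝ} (hb : 0 ≤ b) (μ x : ℝ) : 0 ≤ laplaceDensity μ b x := by
  unfold laplaceDensity; positivity

lemma integral_laplaceMeasure {b : ℝ} (hb : 0 ≤ b) (μ : ℝ) (f : ℝ → ℝ) :
    ∫ x, f x ∂laplaceMeasure μ b = ∫ x, laplaceDensity μ b x * f x := by
  have h_meas : Measurable (laplaceDensity μ b) := by unfold laplaceDensity; fun_prop
  rw [laplaceMeasure, integral_withDensity_eq_integral_toReal_smul h_meas.ennreal_ofReal
    (.of_forall fun _ => ENNReal.ofReal_lt_top)]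
  simp only [ENNReal.toReal_ofReal (laplaceDensity_nonneg hb μ _), smul_eq_mul]

lemma mgf_laplaceMeasure {b t : ℝ} (hb : 0 < b) (ht : t ^ 2 * b ^ 2 < 1) (μ : ℝ) :
    mgf id (laplaceMeasure μ b) t = exp (t * μ) / (1 - t ^ 2 * b ^ 2) := by
  have ht' : |t| < 1 / b := by
    rw [lt_div_iff₀ hb, ← abs_of_pos hb, ← abs_mul, abs_lt]
    constructor <;> nlinarith
  calc mgf id (laplaceMeasure μ b) t
      = ∫ x, laplaceDensity μ b (x + μ) * exp (t * (x + μ)) := by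
        rw [mgf, integral_laplaceMeasure hb.le]
        exact (integral_add_right_eq_self (fun x => laplaceDensity μ b x * exp (t * x)) μ).symm
    _ = (2 * b)⁻¹ * exp (t * μ) * ∫ x, exp (t * x - 1 / b * |x|) := by
        rw [← integral_const_mul]
        congr 1 with x
        rw [laplaceDensity, add_sub_cancel_right, mul_assoc, mul_assoc, ← exp_add, ← exp_add]
        ring_nf
    _ = exp (t * μ) / (1 - t ^ 2 * b ^ 2) := by
        rw [integral_exp_mul_sub_mul_abs ht']
        have : 1 - t ^ 2 * b ^ 2 ≠ 0 := by linarith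
        field_simp

lemma inv_one_sub_le_exp_two_mul {x : ℝ} (h0 : 0 ≤ x) (h1 : x ≤ 1 / 2) :
    (1 - x)⁻¹ ≤ exp (2 * x) := by
  calc (1 - x)⁻¹ ≤ 1 + 2 * x := by
        rw [inv_le_iff_one_le_mul₀ (by linarith)]
        nlinarith
    _ ≤ exp (2 * x) := by linarith [add_one_le_exp (2 * x)]

/-- Sub-Gaussian-type bound on the Laplace moment generating function:
for `λ² b² ≤ 1/2`, `∫ exp(λ y) dν(y) ≤ exp(2 λ² b²)`. -/
theorem laplace_mgf_le (b : ℝ) (hb : 0 < b) (lam : ℝ) (hlam : lam ^ 2 * b ^ 2 ≤ 1 / 2) :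
    ∫ y, Real.exp (lam * y) ∂(laplaceMeasure 0 b) ≤ Real.exp (2 * lam ^ 2 * b ^ 2) := by
  change mgf id (laplaceMeasure 0 b) lam ≤ _
  rw [mgf_laplaceMeasure hb (by linarith), mul_zero, exp_zero, one_div, mul_assoc]
  exact inv_one_sub_le_exp_two_mul (by positivity) hlam
end
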